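/- Let F be a field of characteristic ≠ 2, V an infinite-dimensional vector space over F with a nondegenerate quadratic form Q, and φ : V → V an orthogonal linear transformation with Bogolyubov automorphism [φ] of Cl(V,Q). Suppose V' ⊆ V is a finite-dimensional nondegenerate even-dimensional subspace and x is an invertible element of Cl(V,Q) lying in the subalgebra generated by ι(V'), such that [φ](a) = x a x⁻¹ for all a ∈ Cl(V,Q). Then every v ∈ V'^⊥ satisfies φ(v) = v or φ(v) = −v; moreover, V'^⊥ ⊆ V(1) or V'^⊥ ⊆ V(−1). -/

import Mathlib

/-! For `v ⟂ V'` the vector `ι v` anticommutes with the generators of the subalgebra containing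
`x`, so `x * ι v = ι v * involute x` and `ι (φ v) = x * ι v * x⁻¹ = ι v * t` for the single element
`t = involute x * x⁻¹`, which satisfies `t * involute t = 1`. Since `V = V' ⊕ V'^⊥` and `V` is
infinite-dimensional, `V'^⊥` contains an anisotropic `v₀`. Then `t = Q(v₀)⁻¹ ι v₀ ι (φ v₀)` is even,
so `t² = 1`, and `ι v₀ * ι (φ v₀)` and `ι (φ v₀) * ι v₀` both equal `Q(v₀) t`; their sum being
`polar Q v₀ (φ v₀)`, `t` is a scalar `ε`. Hence `φ = ε` on `V'^⊥`, and `Q (φ v₀) = Q v₀` gives `ε² = 1`. -/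

/-- The eigenspace `V(α) = ker (φ - α·Id)` of a linear operator `φ`. -/
noncomputable def eigSp {F V : Type*} [Field F] [AddCommGroup V] [Module F V]
    (φ : V →ₗ[F] V) (α : F) : Submodule F V :=
  LinearMap.ker (φ - α • LinearMap.id)

/-- The eigenspace `V(α)` is `φ`-invariant, so `φ` induces a linear map on the
quotient `V / V(α)`. -/
noncomputable def quotMap {F V : Type*} [Field F] [AddCommGroup V] [Module F V]
    (φ : V →ₗ[F] V) (α : F) : (V ⧸ eigSp φ α) →ₗ[F] (V ⧸ eigSp φ α) :=
  Submodule.mapQ _ _ φ (by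
    intro v hv
    simp only [eigSp, LinearMap.mem_ker, LinearMap.sub_apply, LinearMap.smul_apply,
      LinearMap.id_coe, id_eq, sub_eq_zero, Submodule.mem_comap] at hv ⊢
    rw [hv, map_smul, hv])

open QuadraticMap

namespace CliffordAlgebra

variable {R M : Type*} [CommRing R] [AddCommGroup M] [Module R M] {Q : QuadraticForm R M}

theorem ι_injective [Invertible (2 : R)] : Function.Injective (ι Q) := fun a b hab =>
  (ExteriorAlgebra.ι_inj R a b).mp <| by
    simpa [changeFormEquiv, changeForm_ι] using congrArg (equivExterior Q) hab

theorem mul_ι_eq_ι_mul_involute_of_mem_adjoin {s : Set M} {v : M}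
    (hv : ∀ u ∈ s, polar Q u v = 0) {a : CliffordAlgebra Q}
    (ha : a ∈ Algebra.adjoin R (ι Q '' s)) : a * ι Q v = ι Q v * involute a := by
  induction ha using Algebra.adjoin_induction with
  | mem b hb =>
    obtain ⟨u, hu, rfl⟩ := hb
    rw [involute_ι, mul_neg]
    exact eq_neg_of_add_eq_zero_left <| by rw [ι_mul_ι_add_swap, hv u hu, map_zero]
  | algebraMap r => rw [AlgHom.commutes, Algebra.commutes]
  | add b c _ _ hb hc => rw [add_mul, hb, hc, map_add, mul_add]
  | mul b c _ _ hb hc => rw [mul_assoc, hc, ← mul_assoc, hb, mul_assoc, map_mul]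

theorem involute_mul_inv_mul_involute (x : (CliffordAlgebra Q)ˣ) :
    involute (x : CliffordAlgebra Q) * (↑x⁻¹ : CliffordAlgebra Q) *
      involute (involute (x : CliffordAlgebra Q) * (↑x⁻¹ : CliffordAlgebra Q)) = 1 := by
  rw [map_mul, involute_involute, mul_assoc, ← mul_assoc (↑x⁻¹ : CliffordAlgebra Q),
    Units.inv_mul, one_mul, ← map_mul, Units.mul_inv, map_one]

theorem eq_algebraMap_of_ι_eq_ι_mul {F V : Type*} [Field F] [AddCommGroup V] [Module F V]
    {Q : QuadraticForm F V} (h2 : (2 : F) ≠ 0) {v w : V}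
    (hQv : Q v ≠ 0) (hQw : Q w = Q v) {t : CliffordAlgebra Q}
    (ht : t * involute t = 1) (hw : ι Q w = ι Q v * t) :
    t = algebraMap F _ (polar Q v w / (2 * Q v)) := by
  have hvw : ι Q v * ι Q w = Q v • t := by
    rw [hw, ← mul_assoc, ι_sq_scalar, Algebra.smul_def]
  have htt : t * t = 1 := by
    have : t = (Q v)⁻¹ • (ι Q v * ι Q w) := by rw [hvw, inv_smul_smul₀ hQv]
    rwa [this, map_smul, map_mul, involute_ι, involute_ι, neg_mul_neg, ← this] at ht
  have hwv : ι Q w * ι Q v = Q v • t := by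
    calc ι Q w * ι Q v = ι Q w * (ι Q v * t) * t := by rw [mul_assoc, mul_assoc, htt, mul_one]
      _ = Q v • t := by rw [← hw, ι_sq_scalar, hQw, Algebra.smul_def]
  have hpolar : algebraMap F _ (polar Q v w) = (2 * Q v) • t := by
    rw [← ι_mul_ι_add_swap, hvw, hwv, ← add_smul, two_mul]
  rw [div_eq_inv_mul, map_mul, ← Algebra.smul_def, hpolar, inv_smul_smul₀ (mul_ne_zero h2 hQv)]

end CliffordAlgebra

namespace QuadraticMap

variable {F V : Type*} [Field F] [AddCommGroup V] [Module F V] {Q : QuadraticForm F V}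
  {V' : Submodule F V}

theorem exists_orthogonal_projection [FiniteDimensional F V']
    (hV'nd : ∀ u ∈ V', (∀ w ∈ V', polar Q u w = 0) → u = 0) (v : V) :
    ∃ u ∈ V', ∀ w ∈ V', polar Q (v - u) w = 0 := by
  let f : V →ₗ[F] Module.Dual F V' := V'.subtype.dualMap ∘ₗ polarBilin Q
  have hinj : Function.Injective (f ∘ₗ V'.subtype) := by
    rw [← LinearMap.ker_eq_bot, LinearMap.ker_eq_bot']
    refine fun u hu => Subtype.ext <| hV'nd u u.2 fun w hw => ?_
    simpa [f] using DFunLike.congr_fun hu ⟨w, hw⟩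
  obtain ⟨u, hu⟩ := (LinearMap.injective_iff_surjective_of_finrank_eq_finrank
    Subspace.dual_finrank_eq.symm).mp hinj (f v)
  refine ⟨u, u.2, fun w hw => ?_⟩
  have huv : polar Q u w = polar Q v w := by simpa [f] using DFunLike.congr_fun hu ⟨w, hw⟩
  rw [polar_sub_left, huv, sub_self]

theorem exists_anisotropic_orthogonal [FiniteDimensional F V']
    (hQ : ∀ v : V, (∀ w : V, polar Q v w = 0) → v = 0)
    (hV'nd : ∀ u ∈ V', (∀ w ∈ V', polar Q u w = 0) → u = 0) (hV : ¬ FiniteDimensional F V) :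
    ∃ v : V, (∀ u ∈ V', polar Q v u = 0) ∧ Q v ≠ 0 := by
  by_contra! hiso
  have horth_eq_zero : ∀ v : V, (∀ u ∈ V', polar Q v u = 0) → v = 0 := by
    refine fun v hv => hQ v fun w => ?_
    obtain ⟨u, hu, hwu⟩ := exists_orthogonal_projection hV'nd w
    have hsum : ∀ u' ∈ V', polar Q (v + (w - u)) u' = 0 := fun u' hu' => by
      rw [polar_add_left, hv u' hu', hwu u' hu', add_zero]
    have hvwu : polar Q v (w - u) = 0 := by
      rw [polar, hiso _ hv, hiso _ hwu, hiso _ hsum, sub_zero, sub_zero]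
    rwa [polar_sub_right, hv u hu, sub_zero] at hvwu
  have hV'top : V' = ⊤ := by
    refine eq_top_iff.mpr fun w _ => ?_
    obtain ⟨u, hu, hwu⟩ := exists_orthogonal_projection hV'nd w
    rwa [sub_eq_zero.mp (horth_eq_zero _ hwu)]
  exact hV (Module.Finite.equiv ((LinearEquiv.ofEq _ _ hV'top).trans Submodule.topEquiv))

end QuadraticMap

theorem mem_eigSp_iff {F V : Type*} [Field F] [AddCommGroup V] [Module F V]
    {φ : V →ₗ[F] V} {α : F} {v : V} : v ∈ eigSp φ α ↔ φ v = α • v := by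
  simp [eigSp, sub_eq_zero]

open CliffordAlgebra in
theorem perp_eigen_of_inner_by_element_of_subalgebra_general
    {F V : Type*} [Field F] [AddCommGroup V] [Module F V]
    (hchar : (2 : F) ≠ 0) (hV : ¬ FiniteDimensional F V)
    (Q : QuadraticForm F V)
    (hQ : ∀ v : V, (∀ w : V, QuadraticMap.polar Q v w = 0) → v = 0)
    (φ : V →ₗ[F] V)
    (hφQ : ∀ v : V, Q (φ v) = Q v)
    (θ : CliffordAlgebra Q ≃ₐ[F] CliffordAlgebra Q)
    (hθ : ∀ v : V, θ (CliffordAlgebra.ι Q v) = CliffordAlgebra.ι Q (φ v))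
    (V' : Submodule F V) (hV'fd : FiniteDimensional F V')
    (hV'nd : ∀ u ∈ V', (∀ w ∈ V', QuadraticMap.polar Q u w = 0) → u = 0)
    (x : (CliffordAlgebra Q)ˣ)
    (hx : (x : CliffordAlgebra Q) ∈
      Algebra.adjoin F (CliffordAlgebra.ι Q '' (V' : Set V)))
    (hinner : ∀ a : CliffordAlgebra Q, θ a = x * a * ↑x⁻¹) :
    (∀ v : V, (∀ u ∈ V', QuadraticMap.polar Q v u = 0) → φ v = v ∨ φ v = -v) ∧
      ((∀ v : V, (∀ u ∈ V', QuadraticMap.polar Q v u = 0) → v ∈ eigSp φ 1) ∨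
        (∀ v : V, (∀ u ∈ V', QuadraticMap.polar Q v u = 0) → v ∈ eigSp φ (-1))) := by
  have : Invertible (2 : F) := invertibleOfNonzero hchar
  set t := involute (x : CliffordAlgebra Q) * ↑x⁻¹
  have hφt : ∀ v, (∀ u ∈ V', polar Q v u = 0) → ι Q (φ v) = ι Q v * t := fun v hv => by
    have hxv := mul_ι_eq_ι_mul_involute_of_mem_adjoin (v := v)
      (fun u hu => (polar_comm Q u v).trans (hv u hu)) hx
    rw [← hθ, hinner, hxv, mul_assoc]
  obtain ⟨v₀, hv₀, hQv₀⟩ := exists_anisotropic_orthogonal hQ hV'nd hV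
  obtain ⟨ε, htε⟩ : ∃ ε : F, t = algebraMap F _ ε :=
    ⟨_, eq_algebraMap_of_ι_eq_ι_mul hchar hQv₀ (hφQ v₀) (involute_mul_inv_mul_involute x)
      (hφt v₀ hv₀)⟩
  have hφε : ∀ v, (∀ u ∈ V', polar Q v u = 0) → φ v = ε • v := fun v hv =>
    ι_injective (by rw [hφt v hv, htε, ← Algebra.commutes, ← Algebra.smul_def, map_smul])
  have hε : ε = 1 ∨ ε = -1 := by
    refine mul_self_eq_one_iff.mp (mul_right_cancel₀ hQv₀ ?_)
    rw [← smul_eq_mul, ← QuadraticMap.map_smul, ← hφε v₀ hv₀, hφQ, one_mul]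
  rcases hε with rfl | rfl
  · refine ⟨fun v hv => .inl ?_, .inl fun v hv => mem_eigSp_iff.mpr (hφε v hv)⟩
    rw [hφε v hv, one_smul]
  · refine ⟨fun v hv => .inr ?_, .inr fun v hv => mem_eigSp_iff.mpr (hφε v hv)⟩
    rw [hφε v hv, neg_one_smul]

/-- If the Bogolyubov automorphism `[φ]` is conjugation by an invertible element `x`
lying in the subalgebra generated by `ι(V')` for a finite-dimensional nondegenerate
even-dimensional subspace `V' ⊆ V`, then every `v ∈ V'^⊥` satisfies `φ v = v` or
`φ v = -v`; moreover, `V'^⊥ ⊆ V(1)` or `V'^⊥ ⊆ V(-1)`. -/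
theorem perp_eigen_of_inner_by_element_of_subalgebra
    {F V : Type*} [Field F] [AddCommGroup V] [Module F V]
    (hchar : (2 : F) ≠ 0) (hV : ¬ FiniteDimensional F V)
    (Q : QuadraticForm F V)
    (hQ : ∀ v : V, (∀ w : V, QuadraticMap.polar Q v w = 0) → v = 0)
    (φ : V →ₗ[F] V) (hφbij : Function.Bijective φ)
    (hφQ : ∀ v : V, Q (φ v) = Q v)
    (θ : CliffordAlgebra Q ≃ₐ[F] CliffordAlgebra Q)
    (hθ : ∀ v : V, θ (CliffordAlgebra.ι Q v) = CliffordAlgebra.ι Q (φ v))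
    (V' : Submodule F V) (hV'fd : FiniteDimensional F V')
    (hV'even : Even (Module.finrank F V'))
    (hV'nd : ∀ u ∈ V', (∀ w ∈ V', QuadraticMap.polar Q u w = 0) → u = 0)
    (x : (CliffordAlgebra Q)ˣ)
    (hx : (x : CliffordAlgebra Q) ∈
      Algebra.adjoin F (CliffordAlgebra.ι Q '' (V' : Set V)))
    (hinner : ∀ a : CliffordAlgebra Q, θ a = x * a * ↑x⁻¹) :
    (∀ v : V, (∀ u ∈ V', QuadraticMap.polar Q v u = 0) → φ v = v ∨ φ v = -v) ∧
      ((∀ v : V, (∀ u ∈ V', QuadraticMap.polar Q v u = 0) → v ∈ eigSp φ 1) ∨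
        (∀ v : V, (∀ u ∈ V', QuadraticMap.polar Q v u = 0) → v ∈ eigSp φ (-1))) :=
  perp_eigen_of_inner_by_element_of_subalgebra_general hchar hV Q hQ φ hφQ θ hθ V' hV'fd hV'nd x hx
    hinner
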